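/- Let G be a connected finite simple graph on exactly 5 vertices. Then q(G) = 2 if and only if G contains a spanning subgraph isomorphic to the single-ended candle G'_2, i.e., there exists a bijection f from the vertex set of G'_2 to the vertex set of G such that whenever x and y are adjacent in G'_2, the vertices f(x) and f(y) are adjacent in G. -/

import Mathlib

/-!
If `q(G) = 2`, an affine image of a matrix in `S(G)` with two eigenvalues is an orthogonal
projection `P ∈ S(G)`; replacing `P` by `1 - P` we may take `tr P ≤ 2`. Connectivity makes the
diagonal of `P` nonzero, and then, for a nonadjacent pair `a, b`, the rows `a` and `b` span the
range of `P`, so `P i j = P a i P a j / P a a + P b i P b j / P b b`. Thus `P` is the Gram matrix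
of nonzero vectors in a plane, nonadjacency is orthogonality, and the complement of `G` is
triangle-free with every path `i ⊥ j ⊥ k ⊥ l` closing up to `i ⊥ l`. Comparing entries of
`P * P = P` shows that two nonadjacent vertices never have exactly one common neighbour. On five
vertices these constraints and connectivity force `G'_2 ⊆ G`.

Conversely, `G'_2` misses only the edges `03`, `04`, `12`, and for each of the eight graphs
between `G'_2` and `K_5` an explicit tight frame of five vectors in `ℤ²`, orthogonal exactly
along the non-edges, has a normalised Gram matrix that is the required projection.
-/

open Matrix

/-- `SOfGraph G` is the set of real symmetric matrices whose off-diagonal zero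
pattern is described by the graph `G` (diagonal entries unrestricted). -/
def SOfGraph {V : Type*} [Fintype V] [DecidableEq V] (G : SimpleGraph V) :
    Set (Matrix V V ℝ) :=
  {A | A.IsSymm ∧ ∀ i j : V, i ≠ j → (A i j ≠ 0 ↔ G.Adj i j)}

/-- `qGraph G` is the minimum number of distinct eigenvalues over matrices in `SOfGraph G`. -/
noncomputable def qGraph {V : Type*} [Fintype V] [DecidableEq V] (G : SimpleGraph V) : ℕ :=
  sInf ((fun A => (spectrum ℝ A).ncard) '' SOfGraph G)

/-- Eccentricity of a vertex: maximum graph distance to any vertex. -/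
noncomputable def graphEccent {V : Type*} [Fintype V] (G : SimpleGraph V) (v : V) : ℕ :=
  Finset.univ.sup fun w => G.dist v w

/-- Double-ended candle `G_k` on `2k` vertices: vertex `i` lies in level `(i+1)/2`,
so level `0` and level `k` have one vertex each and intermediate levels have two;
two vertices are adjacent iff they lie in consecutive levels. -/
def doubleCandle (k : ℕ) : SimpleGraph (Fin (2 * k)) :=
  SimpleGraph.fromRel fun a b => (a.val + 1) / 2 + 1 = (b.val + 1) / 2

/-- Single-ended candle `G'_k` on `2k+1` vertices: vertex `i` lies in level `(i+1)/2`,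
so level `0` has one vertex and levels `1,…,k` have two vertices each; two distinct
vertices are adjacent iff they lie in consecutive levels or both lie in level `k`. -/
def singleCandle (k : ℕ) : SimpleGraph (Fin (2 * k + 1)) :=
  SimpleGraph.fromRel fun a b =>
    (a.val + 1) / 2 + 1 = (b.val + 1) / 2 ∨ ((a.val + 1) / 2 = k ∧ (b.val + 1) / 2 = k)

section Spectrum

variable {A : Type*} [Ring A] [StarRing A] [Algebra ℝ A] [TopologicalSpace A] [Nontrivial A]
  [ContinuousFunctionalCalculus ℝ A IsSelfAdjoint]

theorem isIdempotentElem_of_spectrum_eq_pair [StarModule ℝ A] {a : A} (ha : IsSelfAdjoint a)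
    {l m : ℝ} (hlm : l ≠ m) (hspec : spectrum ℝ a = {l, m}) :
    IsIdempotentElem ((l - m)⁻¹ • (a - algebraMap ℝ A m)) := by
  have hsa : IsSelfAdjoint ((l - m)⁻¹ • (a - algebraMap ℝ A m)) :=
    (IsSelfAdjoint.all _).smul (ha.sub (.algebraMap A (.all m)))
  have hspec' : spectrum ℝ (a - algebraMap ℝ A m) = {l - m, 0} := by
    rw [← spectrum.sub_singleton_eq, hspec]
    simp [Set.image_insert_eq]
  rw [isIdempotentElem_iff_spectrum_subset ℝ _ hsa, spectrum.smul_eq_smul _ _ (by simp [hspec']),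
    hspec']
  rintro _ ⟨x, (rfl | rfl), rfl⟩ <;> simp [sub_ne_zero.mpr hlm]

theorem two_le_ncard_spectrum {a : A} (ha : IsSelfAdjoint a) (hfin : (spectrum ℝ a).Finite)
    (hscalar : ∀ r : ℝ, a ≠ algebraMap ℝ A r) : 2 ≤ (spectrum ℝ a).ncard := by
  by_contra! h
  obtain ⟨r, hr⟩ := ContinuousFunctionalCalculus.spectrum_nonempty (R := ℝ) a ha
  have hsub : spectrum ℝ a ⊆ {r} := fun s hs => (Set.ncard_le_one hfin).mp (by omega) s hs r hr
  exact hscalar r (CFC.eq_algebraMap_of_spectrum_subset_singleton a r hsub ha)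

end Spectrum

namespace SOfGraph

variable {V : Type*} [Fintype V] [DecidableEq V] {G : SimpleGraph V} {P : Matrix V V ℝ}

theorem isSelfAdjoint (hP : P ∈ SOfGraph G) : IsSelfAdjoint P :=
  (isHermitian_iff_isSymm.mpr hP.1).isSelfAdjoint

theorem apply_ne_zero (hP : P ∈ SOfGraph G) {i j : V} (h : G.Adj i j) : P i j ≠ 0 :=
  (hP.2 i j h.ne).mpr h

theorem apply_eq_zero (hP : P ∈ SOfGraph G) {i j : V} (h : Gᶜ.Adj i j) : P i j = 0 :=
  not_not.mp fun h' => h.2 ((hP.2 i j h.1).mp h')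

theorem ne_algebraMap (hP : P ∈ SOfGraph G) {i j : V} (h : G.Adj i j) (r : ℝ) :
    P ≠ algebraMap ℝ _ r := by
  rintro rfl
  exact apply_ne_zero hP h (by simp [algebraMap_matrix_apply, h.ne])

theorem adjMatrix_mem [DecidableRel G.Adj] : G.adjMatrix ℝ ∈ SOfGraph G :=
  ⟨G.isSymm_adjMatrix, fun i j _ => by by_cases h : G.Adj i j <;> simp [h]⟩

theorem smul_sub_algebraMap_mem (hP : P ∈ SOfGraph G) {c : ℝ} (hc : c ≠ 0) (m : ℝ) :
    c • (P - algebraMap ℝ _ m) ∈ SOfGraph G := by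
  refine ⟨?_, fun i j hij => ?_⟩
  · simp [IsSymm, algebraMap_eq_diagonal, hP.1.eq]
  · simp [algebraMap_matrix_apply, hij, hc, hP.2 i j hij]

theorem one_sub_mem (hP : P ∈ SOfGraph G) : 1 - P ∈ SOfGraph G := by
  simpa [smul_sub, neg_add_eq_sub] using smul_sub_algebraMap_mem hP (neg_ne_zero.mpr one_ne_zero) 1

theorem reindex_mem {W : Type*} [Fintype W] [DecidableEq W] (e : W ≃ V) {M : Matrix W W ℝ}
    (hM : M ∈ SOfGraph (G.comap e)) : reindex e e M ∈ SOfGraph G := by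
  refine ⟨by simp [IsSymm, hM.1.eq], fun i j hij => ?_⟩
  simpa using hM.2 (e.symm i) (e.symm j) (e.symm.injective.ne hij)

end SOfGraph

section QGraph

variable {V : Type*} [Fintype V] [DecidableEq V] {G : SimpleGraph V}

theorem qGraph_le {A : Matrix V V ℝ} (hA : A ∈ SOfGraph G) : qGraph G ≤ (spectrum ℝ A).ncard :=
  Nat.sInf_le ⟨A, hA, rfl⟩

theorem exists_ncard_spectrum_eq_qGraph :
    ∃ A ∈ SOfGraph G, (spectrum ℝ A).ncard = qGraph G := by
  classical
  exact Nat.sInf_mem (Set.Nonempty.image _ ⟨_, SOfGraph.adjMatrix_mem⟩)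

theorem two_le_qGraph (hG : G ≠ ⊥) : 2 ≤ qGraph G := by
  obtain ⟨i, j, hij⟩ := SimpleGraph.ne_bot_iff_exists_adj.mp hG
  have : Nontrivial V := ⟨i, j, hij.ne⟩
  obtain ⟨A, hA, hq⟩ := exists_ncard_spectrum_eq_qGraph (G := G)
  rw [← hq]
  exact two_le_ncard_spectrum (SOfGraph.isSelfAdjoint hA) A.finite_spectrum
    (SOfGraph.ne_algebraMap hA hij)

theorem qGraph_eq_two_iff (hG : G ≠ ⊥) :
    qGraph G = 2 ↔ ∃ P ∈ SOfGraph G, IsIdempotentElem P := by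
  refine ⟨fun hq => ?_, fun ⟨P, hP, hidem⟩ => ?_⟩
  · obtain ⟨i, j, hij⟩ := SimpleGraph.ne_bot_iff_exists_adj.mp hG
    have : Nontrivial V := ⟨i, j, hij.ne⟩
    obtain ⟨A, hA, hA2⟩ := exists_ncard_spectrum_eq_qGraph (G := G)
    obtain ⟨l, m, hlm, hspec⟩ := Set.ncard_eq_two.mp (hA2.trans hq)
    exact ⟨_, SOfGraph.smul_sub_algebraMap_mem hA (inv_ne_zero (sub_ne_zero.mpr hlm)) m,
      isIdempotentElem_of_spectrum_eq_pair (SOfGraph.isSelfAdjoint hA) hlm hspec⟩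
  · refine le_antisymm ((qGraph_le hP).trans ?_) (two_le_qGraph hG)
    calc (spectrum ℝ P).ncard ≤ ({0, 1} : Set ℝ).ncard :=
          Set.ncard_le_ncard (hidem.spectrum_subset ℝ) (by simp)
      _ = 2 := Set.ncard_pair zero_ne_one

end QGraph

section Projection

variable {n : Type*} [Fintype n]

theorem Matrix.trace_eq_finrank_range_of_isIdempotentElem [DecidableEq n] {K : Type*} [Field K]
    {P : Matrix n n K} (hP : IsIdempotentElem P) :
    P.trace = Module.finrank K (LinearMap.range (toLin' P)) := by
  rw [← trace_toLin'_eq]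
  exact (LinearMap.IsIdempotentElem.isProj_range _ (hP.map toLinAlgEquiv')).trace

theorem Matrix.eq_zero_of_isIdempotentElem_of_trace_eq_zero [DecidableEq n] {K : Type*} [Field K]
    [CharZero K] {P : Matrix n n K} (hP : IsIdempotentElem P) (htr : P.trace = 0) : P = 0 := by
  rw [← trace_toLin'_eq] at htr
  simpa using LinearMap.IsIdempotentElem.eq_zero_of_trace_eq_zero (hP.map toLinAlgEquiv') htr

theorem IsStarProjection.eq_of_mul_eq_of_trace_le [DecidableEq n] {P Q : Matrix n n ℝ}
    (hP : IsStarProjection P) (hQ : IsStarProjection Q) (hPQ : P * Q = Q)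
    (htr : P.trace ≤ Q.trace) : P = Q := by
  have hR := (hQ.sub_of_mul_eq_right hP hPQ).isIdempotentElem
  have hR0 : (P - Q).trace = 0 :=
    le_antisymm (by rw [trace_sub]; linarith)
      (by rw [trace_eq_finrank_range_of_isIdempotentElem hR]; positivity)
  exact sub_eq_zero.mp (eq_zero_of_isIdempotentElem_of_trace_eq_zero hR hR0)

variable {P : Matrix n n ℝ}

theorem IsStarProjection.apply_comm (hP : IsStarProjection P) (i j : n) : P i j = P j i := by
  simpa using congrFun₂ hP.isSelfAdjoint.star_eq.symm i j

theorem IsStarProjection.dotProduct_row (hP : IsStarProjection P) (i j : n) :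
    P i ⬝ᵥ P j = P i j := by
  conv_rhs => rw [← hP.isIdempotentElem.eq]
  simp [mul_apply, dotProduct, hP.apply_comm j]

theorem IsStarProjection.mulVec_row (hP : IsStarProjection P) (j : n) : P *ᵥ P j = P j := by
  ext i
  rw [mulVec, hP.dotProduct_row, hP.apply_comm]

theorem IsStarProjection.apply_self_ne_zero (hP : IsStarProjection P) {i j : n}
    (hij : P i j ≠ 0) : P i i ≠ 0 := by
  rw [← hP.dotProduct_row]
  exact fun h => hij (congrFun (dotProduct_self_eq_zero.mp h) j)

theorem IsStarProjection.eq_sum_vecMulVec_of_trace_le [DecidableEq n] (hP : IsStarProjection P)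
    {S : Finset n} (hdiag : ∀ l ∈ S, P l l ≠ 0) (horth : ∀ l ∈ S, ∀ m ∈ S, l ≠ m → P l m = 0)
    (htr : P.trace ≤ S.card) : P = ∑ l ∈ S, (P l l)⁻¹ • vecMulVec (P l) (P l) := by
  -- `Q` is a projection below `P` whose trace is `#S`.
  set Q := ∑ l ∈ S, (P l l)⁻¹ • vecMulVec (P l) (P l)
  have hQQ : Q * Q = Q := by
    simp only [Q, Finset.sum_mul, Finset.mul_sum, smul_mul_smul_comm, vecMulVec_mul_vecMulVec,
      hP.dotProduct_row]
    refine Finset.sum_congr rfl fun l hl => ?_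
    rw [Finset.sum_eq_single l (fun m hm hml => by simp [horth m hm l hl hml]) (by simp [hl]),
      vecMulVec_smul, smul_smul, mul_assoc, inv_mul_cancel₀ (hdiag l hl), mul_one]
  have hQ : IsStarProjection Q := by
    refine ⟨hQQ, ?_⟩
    ext i j
    simp [Q, Matrix.sum_apply, vecMulVec_apply, mul_comm]
  have hPQ : P * Q = Q := by
    simp only [Q, Finset.mul_sum, mul_smul_comm, mul_vecMulVec, hP.mulVec_row]
  refine hP.eq_of_mul_eq_of_trace_le hQ hPQ (htr.trans_eq ?_)
  simp only [Q, trace_sum, trace_smul, trace_vecMulVec, hP.dotProduct_row, smul_eq_mul]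
  rw [Finset.sum_congr rfl fun l hl => inv_mul_cancel₀ (hdiag l hl)]
  simp

theorem IsStarProjection.apply_eq_of_apply_eq_zero [DecidableEq n] (hP : IsStarProjection P)
    (htr : P.trace ≤ 2) {a b : n} (hab : a ≠ b) (ha : P a a ≠ 0) (hb : P b b ≠ 0)
    (h : P a b = 0) (i j : n) :
    P i j = P a i * P a j / P a a + P b i * P b j / P b b := by
  have key := hP.eq_sum_vecMulVec_of_trace_le (S := {a, b}) (by simp [ha, hb])
    (by simp [h, hP.apply_comm b a]) (by simp [Finset.card_pair hab, htr])
  conv_lhs => rw [key, Finset.sum_pair hab]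
  simp [vecMulVec_apply, div_eq_inv_mul]

end Projection

section PatternOfProjection

theorem SimpleGraph.compl_adj_or_compl_adj_of_notMem_commonNeighbors {V : Type*}
    {G : SimpleGraph V} {a b k : V} (hab : Gᶜ.Adj a b) (hk : k ∉ G.commonNeighbors a b) :
    Gᶜ.Adj a k ∨ Gᶜ.Adj k b := by
  by_cases hka : k = a
  · exact .inr (hka ▸ hab)
  by_cases hkb : k = b
  · exact .inl (hkb ▸ hab)
  simp only [SimpleGraph.mem_commonNeighbors, not_and_or] at hk
  rcases hk with h | h
  · exact .inl ((G.compl_adj a k).mpr ⟨Ne.symm hka, h⟩)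
  · exact .inr ((G.compl_adj k b).mpr ⟨hkb, fun h' => h h'.symm⟩)

variable {V : Type*} [Fintype V] [DecidableEq V] {G : SimpleGraph V} {P : Matrix V V ℝ}

theorem ncard_commonNeighbors_ne_one (hP : P ∈ SOfGraph G) (hidem : IsIdempotentElem P)
    {a b : V} (hab : Gᶜ.Adj a b) : (G.commonNeighbors a b).ncard ≠ 1 := by
  -- `0 = P a b = ∑ k, P a k * P k b`, whose nonzero terms are indexed by the common neighbours.
  intro h
  obtain ⟨c, hc⟩ := Set.ncard_eq_one.mp h
  have hac : G.Adj a c ∧ G.Adj b c := (G.mem_commonNeighbors).mp (hc ▸ rfl)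
  have hsum : P a b = P a c * P c b := by
    conv_lhs => rw [← hidem.eq, mul_apply]
    refine Finset.sum_eq_single c (fun k _ hkc => ?_) (by simp)
    have hk : k ∉ G.commonNeighbors a b := by simp [hc, hkc]
    rcases SimpleGraph.compl_adj_or_compl_adj_of_notMem_commonNeighbors hab hk with h | h
    · rw [SOfGraph.apply_eq_zero hP h, zero_mul]
    · rw [SOfGraph.apply_eq_zero hP h, mul_zero]
  rw [SOfGraph.apply_eq_zero hP hab] at hsum
  exact mul_ne_zero (SOfGraph.apply_ne_zero hP hac.1) (SOfGraph.apply_ne_zero hP hac.2.symm)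
    hsum.symm

theorem apply_eq_of_compl_adj (hP : P ∈ SOfGraph G) (hidem : IsIdempotentElem P)
    (htr : P.trace ≤ 2) (hdiag : ∀ i, P i i ≠ 0) {a b : V} (hab : Gᶜ.Adj a b) (i j : V) :
    P i j = P a i * P a j / P a a + P b i * P b j / P b b :=
  IsStarProjection.apply_eq_of_apply_eq_zero ⟨hidem, SOfGraph.isSelfAdjoint hP⟩ htr hab.ne
    (hdiag a) (hdiag b) (SOfGraph.apply_eq_zero hP hab) i j

theorem compl_cliqueFree_three (hP : P ∈ SOfGraph G) (hidem : IsIdempotentElem P)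
    (htr : P.trace ≤ 2) (hdiag : ∀ i, P i i ≠ 0) : Gᶜ.CliqueFree 3 := by
  intro t ht
  obtain ⟨i, j, k, hij, hik, hjk, rfl⟩ := SimpleGraph.is3Clique_iff.mp ht
  apply hdiag k
  rw [apply_eq_of_compl_adj hP hidem htr hdiag hij k k, SOfGraph.apply_eq_zero hP hik,
    SOfGraph.apply_eq_zero hP hjk]
  simp

theorem compl_adj_of_compl_adj_of_compl_adj (hP : P ∈ SOfGraph G) (hidem : IsIdempotentElem P)
    (htr : P.trace ≤ 2) (hdiag : ∀ i, P i i ≠ 0) {i j k l : V} (hij : Gᶜ.Adj i j)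
    (hjk : Gᶜ.Adj j k) (hkl : Gᶜ.Adj k l) (hil : i ≠ l) : Gᶜ.Adj i l := by
  refine (G.compl_adj i l).mpr ⟨hil, fun h => SOfGraph.apply_ne_zero hP h ?_⟩
  rw [apply_eq_of_compl_adj hP hidem htr hdiag hjk i l, SOfGraph.apply_eq_zero hP hij.symm,
    SOfGraph.apply_eq_zero hP hkl]
  simp

end PatternOfProjection

instance (k : ℕ) : DecidableRel (singleCandle k).Adj := fun a b =>
  decidable_of_iff' _ (SimpleGraph.fromRel_adj _ a b)

def ContainsSpanningCopy {W V : Type*} (H : SimpleGraph W) (G : SimpleGraph V) : Prop :=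
  ∃ f : W → V, Function.Bijective f ∧ ∀ x y, H.Adj x y → G.Adj (f x) (f y)

section Candle

variable {V : Type*} {G : SimpleGraph V}

theorem SimpleGraph.adj_of_not_compl_adj {x y : V} (hxy : x ≠ y) (h : ¬Gᶜ.Adj x y) :
    G.Adj x y :=
  by_contra fun h' => h ((G.compl_adj x y).mpr ⟨hxy, h'⟩)

theorem SimpleGraph.Connected.commonNeighbors_nonempty (hconn : G.Connected)
    (hpath : ∀ i j k l, Gᶜ.Adj i j → Gᶜ.Adj j k → Gᶜ.Adj k l → i ≠ l → Gᶜ.Adj i l)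
    {a b : V} (hab : Gᶜ.Adj a b) : (G.commonNeighbors a b).Nonempty := by
  -- Otherwise no edge leaves the set of non-neighbours of `b`, which contains `a` but not `b`.
  by_contra hempty
  have hstep : ∀ u w, G.Adj u w → Gᶜ.Adj u b → Gᶜ.Adj w b := by
    intro u w huw hub
    refine (G.compl_adj w b).mpr ⟨fun hwb => hub.2 (hwb ▸ huw), fun hwb => ?_⟩
    have hwa : w ≠ a := fun hwa => hab.2 (hwa ▸ hwb)
    have haw : Gᶜ.Adj a w :=
      (G.compl_adj a w).mpr ⟨hwa.symm, fun haw => hempty ⟨w, haw, hwb.symm⟩⟩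
    exact (hpath u b a w hub hab.symm haw huw.ne).2 huw
  have hwalk : ∀ {u w : V} (p : G.Walk u w), Gᶜ.Adj u b → Gᶜ.Adj w b := by
    intro u w p
    induction p with
    | nil => exact id
    | cons h _ ih => exact fun hu => ih (hstep _ _ h hu)
  exact Gᶜ.loopless.irrefl b (hwalk (hconn a b).some hab)

variable [Fintype V]

theorem containsSpanningCopy_singleCandle_two (hcard : Fintype.card V = 5)
    {v₀ v₁ v₂ v₃ v₄ : V} (h₀₃ : v₀ ≠ v₃) (h₀₄ : v₀ ≠ v₄) (h₁₂ : v₁ ≠ v₂)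
    (a₀₁ : G.Adj v₀ v₁) (a₀₂ : G.Adj v₀ v₂) (a₁₃ : G.Adj v₁ v₃) (a₁₄ : G.Adj v₁ v₄)
    (a₂₃ : G.Adj v₂ v₃) (a₂₄ : G.Adj v₂ v₄) (a₃₄ : G.Adj v₃ v₄) :
    ContainsSpanningCopy (singleCandle 2) G := by
  refine ⟨![v₀, v₁, v₂, v₃, v₄], ?_, fun x y h => ?_⟩
  · rw [Fintype.bijective_iff_injective_and_card]
    refine ⟨fun x y hxy => ?_, by simp [hcard]⟩
    have := a₀₁.ne; have := a₀₂.ne; have := a₁₃.ne; have := a₁₄.ne; have := a₂₃.ne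
    have := a₂₄.ne; have := a₃₄.ne
    fin_cases x <;> fin_cases y <;> simp_all [eq_comm]
  · fin_cases x <;> fin_cases y <;> first
      | exact absurd h (by decide)
      | simp [a₀₁, a₀₂, a₁₃, a₁₄, a₂₃, a₂₄, a₃₄, a₀₁.symm, a₀₂.symm, a₁₃.symm, a₁₄.symm,
          a₂₃.symm, a₂₄.symm, a₃₄.symm]

theorem containsSpanningCopy_of_commonNeighbors (hcard : Fintype.card V = 5) {a b c d e : V}
    (hab : Gᶜ.Adj a b) (hc : c ∈ G.commonNeighbors a b) (hd : d ∈ G.commonNeighbors a b)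
    (he : e ∈ G.commonNeighbors a b) (hcd : c ≠ d) (hce : c ≠ e) (hde : G.Adj d e) :
    ContainsSpanningCopy (singleCandle 2) G :=
  containsSpanningCopy_singleCandle_two hcard hcd hce hab.ne hc.1.symm hc.2.symm hd.1 he.1
    hd.2 he.2 hde

theorem containsSpanningCopy_of_compl_adj (hcard : Fintype.card V = 5) (htri : Gᶜ.CliqueFree 3)
    (hpath : ∀ i j k l, Gᶜ.Adj i j → Gᶜ.Adj j k → Gᶜ.Adj k l → i ≠ l → Gᶜ.Adj i l)
    {a b c d e : V} (hab : Gᶜ.Adj a b) (hcb : Gᶜ.Adj c b) (hd : d ∈ G.commonNeighbors a b)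
    (he : e ∈ G.commonNeighbors a b) (hac : a ≠ c) (hde : d ≠ e) :
    ContainsSpanningCopy (singleCandle 2) G := by
  classical
  have hc : ∀ x ∈ G.commonNeighbors a b, G.Adj x c := fun x hx =>
    G.adj_of_not_compl_adj (fun h => hcb.2 (h ▸ hx.2.symm))
      fun hxc => (hpath a b c x hab hcb.symm hxc.symm hx.1.ne).2 hx.1
  have hac : G.Adj a c := G.adj_of_not_compl_adj hac fun h =>
    htri {a, b, c} (SimpleGraph.is3Clique_triple_iff.mpr ⟨hab, h, hcb.symm⟩)
  exact containsSpanningCopy_singleCandle_two hcard hab.ne.symm hcb.ne.symm hde hd.2 he.2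
    hd.1.symm (hc d hd) he.1.symm (hc e he) hac

theorem containsSpanningCopy_singleCandle_two_of_compl (hconn : G.Connected)
    (hcard : Fintype.card V = 5) (htri : Gᶜ.CliqueFree 3)
    (hpath : ∀ i j k l, Gᶜ.Adj i j → Gᶜ.Adj j k → Gᶜ.Adj k l → i ≠ l → Gᶜ.Adj i l)
    (hcommon : ∀ a b, Gᶜ.Adj a b → (G.commonNeighbors a b).ncard ≠ 1) :
    ContainsSpanningCopy (singleCandle 2) G := by
  classical
  by_cases hcomplete : Gᶜ = ⊥
  · let e := (Fintype.equivFinOfCardEq hcard).symm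
    exact ⟨e, e.bijective, fun x y h =>
      G.adj_of_not_compl_adj (e.injective.ne h.ne) (by simp [hcomplete])⟩
  obtain ⟨a, b, hab⟩ := SimpleGraph.ne_bot_iff_exists_adj.mp hcomplete
  have hcn : 1 < (G.commonNeighbors a b).ncard := by
    have := (hconn.commonNeighbors_nonempty hpath hab).ncard_pos
    have := hcommon a b hab
    omega
  obtain ⟨d, e, hd, he, hde⟩ := (Set.one_lt_ncard_iff (Set.toFinite _)).mp hcn
  obtain ⟨c, -, hc⟩ := Finset.exists_mem_notMem_of_card_lt_card
    (s := {a, b, d, e}) (t := Finset.univ)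
    (by rw [Finset.card_univ, hcard]; exact Finset.card_le_four.trans_lt (by norm_num))
  simp only [Finset.mem_insert, Finset.mem_singleton, not_or] at hc
  obtain ⟨hca, hcb, hcd, hce⟩ := hc
  by_cases hca' : Gᶜ.Adj c a
  · rw [SimpleGraph.commonNeighbors_symm] at hd he
    exact containsSpanningCopy_of_compl_adj hcard htri hpath hab.symm hca' hd he
      (Ne.symm hcb) hde
  by_cases hcb' : Gᶜ.Adj c b
  · exact containsSpanningCopy_of_compl_adj hcard htri hpath hab hcb' hd he (Ne.symm hca) hde
  have hc : c ∈ G.commonNeighbors a b :=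
    ⟨(G.adj_of_not_compl_adj hca hca').symm, (G.adj_of_not_compl_adj hcb hcb').symm⟩
  by_cases hde' : G.Adj d e
  · exact containsSpanningCopy_of_commonNeighbors hcard hab hc hd he hcd hce hde'
  by_cases hcd' : G.Adj c d
  · exact containsSpanningCopy_of_commonNeighbors hcard hab he hc hd (Ne.symm hce)
      (Ne.symm hde) hcd'
  by_cases hce' : G.Adj c e
  · exact containsSpanningCopy_of_commonNeighbors hcard hab hd hc he (Ne.symm hcd) hde hce'
  exact absurd (SimpleGraph.is3Clique_triple_iff.mpr ⟨(G.compl_adj c d).mpr ⟨hcd, hcd'⟩,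
    (G.compl_adj c e).mpr ⟨hce, hce'⟩, (G.compl_adj d e).mpr ⟨hde, hde'⟩⟩) (htri _)

end Candle

section Forward

variable {V : Type*} [Fintype V] [DecidableEq V] {G : SimpleGraph V}

theorem exists_idempotent_mem_SOfGraph_trace_le {k : ℕ} (hcard : Fintype.card V = 2 * k + 1)
    {P : Matrix V V ℝ} (hP : P ∈ SOfGraph G) (hidem : IsIdempotentElem P) :
    ∃ Q ∈ SOfGraph G, IsIdempotentElem Q ∧ Q.trace ≤ k := by
  have hr := trace_eq_finrank_range_of_isIdempotentElem hidem
  set r := Module.finrank ℝ (LinearMap.range (toLin' P))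
  by_cases hrk : r ≤ k
  · exact ⟨P, hP, hidem, by rw [hr]; exact_mod_cast hrk⟩
  refine ⟨1 - P, SOfGraph.one_sub_mem hP, hidem.one_sub, ?_⟩
  rw [trace_sub, trace_one, hcard, hr]
  push_cast
  have : (k : ℝ) + 1 ≤ r := by exact_mod_cast Nat.lt_of_not_le hrk
  linarith

theorem containsSpanningCopy_singleCandle_two_of_idempotent (hconn : G.Connected)
    (hcard : Fintype.card V = 5) {P : Matrix V V ℝ} (hP : P ∈ SOfGraph G)
    (hidem : IsIdempotentElem P) (htr : P.trace ≤ 2) :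
    ContainsSpanningCopy (singleCandle 2) G := by
  have : Nontrivial V := Fintype.one_lt_card_iff_nontrivial.mp (by omega)
  have hdiag : ∀ i, P i i ≠ 0 := fun i =>
    have ⟨_, hij⟩ := hconn.preconnected.exists_adj_of_nontrivial i
    IsStarProjection.apply_self_ne_zero ⟨hidem, SOfGraph.isSelfAdjoint hP⟩
      (SOfGraph.apply_ne_zero hP hij)
  exact containsSpanningCopy_singleCandle_two_of_compl hconn hcard
    (compl_cliqueFree_three hP hidem htr hdiag)
    (fun _ _ _ _ => compl_adj_of_compl_adj_of_compl_adj hP hidem htr hdiag)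
    (fun _ _ => ncard_commonNeighbors_ne_one hP hidem)

end Forward

section Frame

variable {m n : Type*} [Fintype m] [DecidableEq m] [Fintype n] [DecidableEq n]

theorem isIdempotentElem_smul_mul_transpose {W : Matrix m n ℝ} {N : ℝ} (hN : N ≠ 0)
    (hW : Wᵀ * W = N • 1) : IsIdempotentElem (N⁻¹ • (W * Wᵀ)) := by
  rw [IsIdempotentElem, smul_mul_smul_comm, Matrix.mul_assoc, ← Matrix.mul_assoc Wᵀ, hW,
    Matrix.smul_mul, Matrix.one_mul, Matrix.mul_smul, smul_smul, mul_assoc,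
    inv_mul_cancel₀ hN, mul_one]

theorem exists_idempotent_mem_SOfGraph_of_int_frame {H : SimpleGraph m} (W : Matrix m n ℤ)
    {N : ℤ} (hN : N ≠ 0) (hW : Wᵀ * W = N • 1)
    (hpat : ∀ i j, i ≠ j → ((W * Wᵀ) i j ≠ 0 ↔ H.Adj i j)) :
    ∃ P ∈ SOfGraph H, IsIdempotentElem P := by
  let Wr := W.map (Int.castRingHom ℝ)
  have hWr : Wrᵀ * Wr = (N : ℝ) • 1 := by
    rw [← transpose_map, ← Matrix.map_mul, hW]
    ext i j
    simp only [map_apply, Matrix.smul_apply, one_apply]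
    split_ifs <;> simp
  have hgram : Wr * Wrᵀ = (W * Wᵀ).map (Int.castRingHom ℝ) := by
    rw [Matrix.map_mul, transpose_map]
  refine ⟨(N : ℝ)⁻¹ • (Wr * Wrᵀ), ⟨?_, fun i j hij => ?_⟩,
    isIdempotentElem_smul_mul_transpose (Int.cast_ne_zero.mpr hN) hWr⟩
  · simp [IsSymm, transpose_mul]
  · rw [← hpat i j hij, hgram]
    simp [hN]

end Frame

-- `p`, `q`, `r` select which of the non-edges `03`, `04`, `12` of `singleCandle 2` are added.
def candleCompletion (p q r : Bool) : SimpleGraph (Fin 5) :=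
  SimpleGraph.fromRel fun x y => (singleCandle 2).Adj x y ∨
    (p ∧ x = 0 ∧ y = 3) ∨ (q ∧ x = 0 ∧ y = 4) ∨ (r ∧ x = 1 ∧ y = 2)

instance (p q r : Bool) : DecidableRel (candleCompletion p q r).Adj := fun x y =>
  decidable_of_iff' _ (SimpleGraph.fromRel_adj _ x y)

-- Found by a search over integer vectors with entries in `[-5, 5]`; `30` is a frame bound
-- shared by all eight cases.
def candleFrame : Bool → Bool → Bool → Matrix (Fin 5) (Fin 2) ℤ
  | false, false, false => !![5, 0; 2, 1; 1, -2; 0, 4; 0, 3]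
  | false, false, true => !![5, 0; 2, 2; 1, -4; 0, 3; 0, 1]
  | false, true, false => !![4, 0; 3, 3; 1, -1; 0, 2; 2, -4]
  | false, true, true => !![4, 0; 3, 2; 2, -1; 0, 3; 1, -4]
  | true, false, false => !![4, 0; 3, 3; 1, -1; 2, -4; 0, 2]
  | true, false, true => !![4, 0; 3, 2; 2, -1; 1, -4; 0, 3]
  | true, true, false => !![4, 1; 3, 0; 0, 4; 2, -3; 1, 2]
  | true, true, true => !![4, 3; 3, -2; 2, -2; 1, -2; 0, 3]

theorem candleFrame_transpose_mul_self (p q r : Bool) :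
    (candleFrame p q r)ᵀ * candleFrame p q r = 30 • 1 := by
  revert p q r
  decide

theorem candleFrame_mul_transpose_ne_zero_iff (p q r : Bool) (x y : Fin 5) (hxy : x ≠ y) :
    (candleFrame p q r * (candleFrame p q r)ᵀ) x y ≠ 0 ↔ (candleCompletion p q r).Adj x y := by
  revert p q r x y
  decide

theorem eq_candleCompletion {H : SimpleGraph (Fin 5)} [DecidableRel H.Adj]
    (hH : singleCandle 2 ≤ H) :
    H = candleCompletion (H.Adj 0 3) (H.Adj 0 4) (H.Adj 1 2) := by
  have h01 : H.Adj 0 1 := hH (by decide)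
  have h02 : H.Adj 0 2 := hH (by decide)
  have h13 : H.Adj 1 3 := hH (by decide)
  have h14 : H.Adj 1 4 := hH (by decide)
  have h23 : H.Adj 2 3 := hH (by decide)
  have h24 : H.Adj 2 4 := hH (by decide)
  have h34 : H.Adj 3 4 := hH (by decide)
  ext x y
  fin_cases x <;> fin_cases y <;> simp +decide [candleCompletion, h01, h02, h13, h14, h23, h24,
    h34, h01.symm, h02.symm, h13.symm, h14.symm, h23.symm, h24.symm, h34.symm, H.adj_comm 3 0,
    H.adj_comm 4 0, H.adj_comm 2 1]

theorem exists_idempotent_mem_SOfGraph_of_containsSpanningCopy {V : Type*} [Fintype V]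
    [DecidableEq V] {G : SimpleGraph V} (h : ContainsSpanningCopy (singleCandle 2) G) :
    ∃ P ∈ SOfGraph G, IsIdempotentElem P := by
  classical
  obtain ⟨f, hf, hadj⟩ := h
  let e := Equiv.ofBijective f hf
  obtain ⟨M, hM, hMi⟩ : ∃ M ∈ SOfGraph (G.comap e), IsIdempotentElem M := by
    rw [eq_candleCompletion (H := G.comap e) fun x y h => hadj x y h]
    exact exists_idempotent_mem_SOfGraph_of_int_frame _ (by norm_num)
      (candleFrame_transpose_mul_self _ _ _) (candleFrame_mul_transpose_ne_zero_iff _ _ _)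
  exact ⟨_, SOfGraph.reindex_mem e hM, hMi.map (reindexAlgEquiv ℝ ℝ e)⟩

/-- A connected graph `G` on exactly `5` vertices has `q(G) = 2` iff `G` contains a
spanning subgraph isomorphic to the single-ended candle `G'_2`. -/
theorem stmt18 {V : Type*} [Fintype V] [DecidableEq V] (G : SimpleGraph V)
    (hconn : G.Connected) (hcard : Fintype.card V = 5) :
    qGraph G = 2 ↔ ∃ f : Fin (2 * 2 + 1) → V, Function.Bijective f ∧
      ∀ x y : Fin (2 * 2 + 1), (singleCandle 2).Adj x y → G.Adj (f x) (f y) := by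
  have : Nontrivial V := Fintype.one_lt_card_iff_nontrivial.mp (by omega)
  have hG : G ≠ ⊥ := SimpleGraph.ne_bot_iff_exists_adj.mpr
    ⟨_, hconn.preconnected.exists_adj_of_nontrivial (Classical.arbitrary V)⟩
  rw [qGraph_eq_two_iff hG]
  refine ⟨fun ⟨P, hP, hidem⟩ => ?_, exists_idempotent_mem_SOfGraph_of_containsSpanningCopy⟩
  obtain ⟨Q, hQ, hQidem, htr⟩ := exists_idempotent_mem_SOfGraph_trace_le (k := 2) hcard hP hidem
  exact containsSpanningCopy_singleCandle_two_of_idempotent hconn hcard hQ hQidem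
    (by exact_mod_cast htr)
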